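/- The noisy voter model has strong spatial mixing for all values of the noise parameter: for every d ≥ 1 and every δ > 0 there exist constants C, c > 0 such that for every finite box G ⊂ ℤ^d, every box H ⊆ G, every site u ∈ ∂G, and every pair of boundary conditions τ, τ^u ∈ {0,1}^{∂G} that differ only at u, the unique stationary distributions μ_G^τ and μ_G^{τ^u} of the noisy voter dynamics on G with boundary conditions τ and τ^u respectively satisfy ‖ μ_G^τ|_H − μ_G^{τ^u}|_H ‖ ≤ C·|V(H)|·exp(−c·dist(u, H)). -/

import Mathlib

/-!
Couple the two stationary dynamics by the basic coupling, in which sites where the two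
configurations agree flip together as far as the rates allow. With `α = 1/(2δ+1)`, a
disagreement at `x ∈ G` is then created at rate at most `α·D(x)/(2d)` and removed at rate at least
`1 - α·D(x)/(2d)`, where `D(x)` counts the disagreeing neighbours of `x` (boundary sites included).
Hence in a stationary coupling the disagreement probabilities `ρ` satisfy
`ρ(x) ≤ α · mean_{y ~ x} ρ(y)` on `G`, with `ρ = 0` on `∂G ∖ {u}`; a maximum principle gives
`ρ(x) ≤ α^dist(x,u)`, and the total variation distance of the marginals on `H` is at most
`∑_{x ∈ H} ρ(x)`. A stationary coupling is only needed approximately: the Cesàro averages of the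
uniformised coupled chain started from `μ₁ ⊗ μ₂` are couplings that are stationary up to `O(1/n)`.
-/

open Finset

/-- Total variation distance between two (probability) measures on a finite set:
the maximum over all events `A` of `|μ₁(A) - μ₂(A)|`. -/
noncomputable def tvDist {S : Type*} [Fintype S] (μ ν : S → ℝ) : ℝ :=
  Finset.univ.powerset.sup' (Finset.powerset_nonempty _) fun A =>
    |∑ s ∈ A, μ s - ∑ s ∈ A, ν s|

/-- The ℓ¹ (graph) distance on the lattice `ℤ^d`. -/
def latDist {d : ℕ} (u v : Fin d → ℤ) : ℕ := ∑ i, (u i - v i).natAbs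

/-- Two lattice sites are adjacent iff their ℓ¹ distance is `1`. -/
def latAdj {d : ℕ} (u v : Fin d → ℤ) : Prop := latDist u v = 1

instance {d : ℕ} (u v : Fin d → ℤ) : Decidable (latAdj u v) :=
  inferInstanceAs (Decidable (latDist u v = 1))

/-- The set of lattice neighbours of a site `x ∈ ℤ^d`: the sites `x ± e_i`. -/
def latNbrs {d : ℕ} (x : Fin d → ℤ) : Finset (Fin d → ℤ) :=
  (Finset.univ : Finset (Fin d × Bool)).image
    (fun p => Function.update x p.1 (x p.1 + if p.2 then 1 else -1))

/-- The boundary `∂G` of a box `G ⊂ ℤ^d`: the sites not in `G` that are adjacent to some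
site of `G`. -/
def boxBoundary {d : ℕ} (G : Finset (Fin d → ℤ)) : Finset (Fin d → ℤ) :=
  (G.biUnion latNbrs) \ G

/-- The configuration on `G ∪ ∂G` obtained by combining an interior configuration `η` on `G`
with a boundary condition `τ` on `∂G`. -/
def fullConf {d : ℕ} (G : Finset (Fin d → ℤ)) (τ : {y // y ∈ boxBoundary G} → Bool)
    (η : {x // x ∈ G} → Bool) (y : Fin d → ℤ) : Bool :=
  if h : y ∈ G then η ⟨y, h⟩ else if h' : y ∈ boxBoundary G then τ ⟨y, h'⟩ else false

/-- Flip rate at `x ∈ G` of the noisy voter dynamics on the box `G ⊂ ℤ^d` with boundary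
condition `τ`: `(1/(2δ+1))·[(1/(2d))·#{y ~ x : σ(y) ≠ η(x)} + δ]`, where `σ` agrees with `η`
on `G` and with `τ` on `∂G` (all neighbours of `x` lie in `G ∪ ∂G`). -/
noncomputable def boxRate {d : ℕ} (δ : ℝ) (G : Finset (Fin d → ℤ))
    (τ : {y // y ∈ boxBoundary G} → Bool) (x : {x // x ∈ G}) (η : {x // x ∈ G} → Bool) : ℝ :=
  (1 / (2 * δ + 1)) *
    ((1 / (2 * (d : ℝ))) *
      (((G ∪ boxBoundary G).filter fun y => latAdj (x : Fin d → ℤ) y ∧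
          fullConf G τ η y ≠ η x).card : ℝ) + δ)

/-- The rate matrix of the noisy voter dynamics on the box `G` with boundary condition `τ`:
single-spin flips occur at rate `boxRate`, transitions changing two or more spins have rate
`0`, and diagonal entries make rows sum to `0`. -/
noncomputable def boxQ {d : ℕ} (δ : ℝ) (G : Finset (Fin d → ℤ))
    (τ : {y // y ∈ boxBoundary G} → Bool) :
    Matrix ({x // x ∈ G} → Bool) ({x // x ∈ G} → Bool) ℝ := fun η η' =>
  if η = η' then -∑ x, boxRate δ G τ x η
  else if (Finset.univ.filter fun v => η v ≠ η' v).card = 1 then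
    ∑ x ∈ Finset.univ.filter (fun v : {x // x ∈ G} => η v ≠ η' v), boxRate δ G τ x η
  else 0

/-- The projection (marginal) onto `{0,1}^H` of a measure `μ` on `{0,1}^G`, for `H ⊆ G`. -/
noncomputable def projMeasure {d : ℕ} (G H : Finset (Fin d → ℤ)) (hHG : H ⊆ G)
    (μ : ({x // x ∈ G} → Bool) → ℝ) (ζ : {x // x ∈ H} → Bool) : ℝ :=
  ∑ η ∈ Finset.univ.filter
      (fun η : {x // x ∈ G} → Bool => ∀ v : {x // x ∈ H}, η ⟨v.1, hHG v.2⟩ = ζ v), μ η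

/-- The distance from a site `u` to a box `H`: `min_{v ∈ H} dist(u,v)`. -/
noncomputable def distToBox {d : ℕ} (u : Fin d → ℤ) (H : Finset (Fin d → ℤ)) : ℕ :=
  sInf {k : ℕ | ∃ v ∈ H, k = latDist u v}

open Matrix

section Lattice

variable {d : ℕ}

lemma latDist_comm (u v : Fin d → ℤ) : latDist u v = latDist v u :=
  Finset.sum_congr rfl fun i _ => by omega

lemma latDist_self (u : Fin d → ℤ) : latDist u u = 0 := by
  simp [latDist]

lemma latDist_triangle (u v w : Fin d → ℤ) : latDist u w ≤ latDist u v + latDist v w := by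
  rw [latDist, latDist, latDist, ← Finset.sum_add_distrib]
  exact Finset.sum_le_sum fun i _ => by omega

lemma exists_eq_one_of_sum_eq_one {ι : Type*} [Fintype ι] {f : ι → ℕ} (h : ∑ i, f i = 1) :
    ∃ i, f i = 1 ∧ ∀ j ≠ i, f j = 0 := by
  classical
  obtain ⟨i, -, hi⟩ := Finset.exists_ne_zero_of_sum_ne_zero (s := Finset.univ) (f := f) (by omega)
  have hrest := Finset.add_sum_erase Finset.univ f (Finset.mem_univ i)
  refine ⟨i, by omega, fun j hj => ?_⟩
  have hle := Finset.single_le_sum (f := f) (fun _ _ => Nat.zero_le _)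
    (Finset.mem_erase.mpr ⟨hj, Finset.mem_univ j⟩)
  omega

lemma mem_latNbrs_iff_latAdj {x y : Fin d → ℤ} : y ∈ latNbrs x ↔ latAdj x y := by
  simp only [latNbrs, latAdj, latDist, Finset.mem_image, Finset.mem_univ, true_and, Prod.exists]
  constructor
  · rintro ⟨i, b, rfl⟩
    rw [Finset.sum_eq_single i (fun j _ hj => by simp [Function.update_of_ne hj]) (by simp)]
    cases b <;> simp
  · intro h
    obtain ⟨i, hi, hj⟩ := exists_eq_one_of_sum_eq_one h
    refine ⟨i, decide (y i = x i + 1), funext fun j => ?_⟩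
    rcases eq_or_ne j i with rfl | hji
    · by_cases hy : y j = x j + 1 <;> simp [hy]; omega
    · have := hj j hji
      rw [Function.update_of_ne hji]
      omega

lemma card_latNbrs (x : Fin d → ℤ) : (latNbrs x).card = 2 * d := by
  rw [latNbrs, Finset.card_image_of_injective, Finset.card_univ, Fintype.card_prod,
    Fintype.card_fin, Fintype.card_bool, mul_comm]
  rintro ⟨i, b⟩ ⟨j, c⟩ h
  have hi := congrFun h i
  by_cases hij : i = j
  · subst hij
    cases b <;> cases c <;> simp at hi ⊢
  · simp only [Function.update_self, Function.update_of_ne hij] at hi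
    cases b <;> cases c <;> simp at hi

lemma latNbrs_subset_union_boxBoundary {G : Finset (Fin d → ℤ)} {x : Fin d → ℤ} (hx : x ∈ G) :
    latNbrs x ⊆ G ∪ boxBoundary G := by
  intro y hy
  by_cases hyG : y ∈ G
  · exact Finset.mem_union_left _ hyG
  · exact Finset.mem_union_right _ (Finset.mem_sdiff.mpr ⟨Finset.mem_biUnion.mpr ⟨x, hx, hy⟩, hyG⟩)

lemma filter_latAdj_and_eq_filter_latNbrs {G : Finset (Fin d → ℤ)} {x : Fin d → ℤ} (hx : x ∈ G)
    (p : (Fin d → ℤ) → Prop) [DecidablePred p] :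
    (G ∪ boxBoundary G).filter (fun y => latAdj x y ∧ p y) = (latNbrs x).filter p := by
  ext y
  simp only [Finset.mem_filter, ← mem_latNbrs_iff_latAdj]
  exact ⟨fun h => h.2, fun h => ⟨latNbrs_subset_union_boxBoundary hx h.1, h⟩⟩

lemma mean_latNbrs_le {g : (Fin d → ℤ) → ℝ} {x : Fin d → ℤ} {B : ℝ} (hB : 0 ≤ B)
    (hg : ∀ z ∈ latNbrs x, g z ≤ B) : 1 / (2 * (d : ℝ)) * ∑ z ∈ latNbrs x, g z ≤ B := by
  calc 1 / (2 * (d : ℝ)) * ∑ z ∈ latNbrs x, g z ≤ 1 / (2 * (d : ℝ)) * (2 * d * B) := by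
        gcongr
        simpa [card_latNbrs] using Finset.sum_le_card_nsmul _ _ _ hg
    _ ≤ B := by
        rcases Nat.eq_zero_or_pos d with rfl | hd
        · simpa using hB
        · field_simp; rfl

lemma le_pow_add_of_le_mean {G : Finset (Fin d → ℤ)} {u : Fin d → ℤ}
    {g : (Fin d → ℤ) → ℝ} {α e : ℝ} (hα₀ : 0 ≤ α) (hα₁ : α < 1) (he : 0 ≤ e)
    (hg : ∀ y, g y ≤ 1) (hout : ∀ y ∉ G, y ≠ u → g y ≤ 0)
    (hmean : ∀ x ∈ G, g x ≤ α * (1 / (2 * (d : ℝ)) * ∑ z ∈ latNbrs x, g z) + e) :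
    ∀ k y, k ≤ latDist y u → g y ≤ α ^ k + e / (1 - α) := by
  intro k
  induction k with
  | zero =>
    intro y _
    linarith [hg y, div_nonneg he (by linarith : (0 : ℝ) ≤ 1 - α)]
  | succ k ih =>
    intro y hk
    have hyu : y ≠ u := by
      rintro rfl
      rw [latDist_self] at hk
      omega
    by_cases hyG : y ∈ G
    swap
    · linarith [hout y hyG hyu, pow_nonneg hα₀ (k + 1),
        div_nonneg he (by linarith : (0 : ℝ) ≤ 1 - α)]
    set B := α ^ k + e / (1 - α)
    have hB : 0 ≤ B := by positivity
    have hnbr : ∀ z ∈ latNbrs y, g z ≤ B := fun z hz => ih z <| by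
      have := latDist_triangle y z u
      rw [mem_latNbrs_iff_latAdj.mp hz] at this
      omega
    calc g y ≤ α * B + e := by nlinarith [hmean y hyG, mean_latNbrs_le hB hnbr]
      _ = α ^ (k + 1) + e / (1 - α) := by
        simp only [B]
        field_simp [(by linarith : (1 : ℝ) - α ≠ 0)]
        ring

end Lattice

lemma le_of_forall_pos_le_add_mul {a b c : ℝ} (h : ∀ ε > 0, a ≤ b + c * ε) : a ≤ b := by
  refine le_of_forall_pos_le_add fun ε hε => ?_
  have hc : c * (ε / (|c| + 1)) ≤ ε := by
    rw [mul_div_assoc', div_le_iff₀ (by positivity)]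
    nlinarith [le_abs_self c]
  linarith [h (ε / (|c| + 1)) (by positivity)]

def mismatch (a b : Bool) : ℝ := if a = b then 0 else 1

lemma mismatch_nonneg (a b : Bool) : 0 ≤ mismatch a b := by
  unfold mismatch; split <;> norm_num

lemma mismatch_le_one (a b : Bool) : mismatch a b ≤ 1 := by
  unfold mismatch; split <;> norm_num

lemma mismatch_self (a : Bool) : mismatch a a = 0 := if_pos rfl

lemma mismatch_not_left (a b : Bool) : mismatch (!a) b = 1 - mismatch a b := by
  cases a <;> cases b <;> norm_num [mismatch]

lemma mismatch_not_right (a b : Bool) : mismatch a (!b) = 1 - mismatch a b := by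
  cases a <;> cases b <;> norm_num [mismatch]

lemma abs_mismatch_sub_mismatch_le (a b c : Bool) :
    |mismatch a c - mismatch b c| ≤ mismatch a b := by
  cases a <;> cases b <;> cases c <;> norm_num [mismatch]

lemma one_sub_mismatch_le_mismatch_add_mismatch {c c' : Bool} (h : c ≠ c') (a b : Bool) :
    1 - mismatch a b ≤ mismatch a c + mismatch b c' := by
  cases a <;> cases b <;> cases c <;> cases c' <;> simp_all [mismatch]

section SpinFlip

variable {V : Type*} [DecidableEq V]

def flipAt (η : V → Bool) (x : V) : V → Bool := Function.update η x (!η x)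

lemma flipAt_ne (η : V → Bool) (x : V) : flipAt η x ≠ η := fun h => by
  simpa [flipAt] using congrFun h x

lemma flipAt_injective (η : V → Bool) : Function.Injective (flipAt η) := by
  intro x y h
  by_contra hxy
  simpa [flipAt, Function.update_of_ne hxy] using congrFun h x

variable [Fintype V]

lemma filter_ne_flipAt (η : V → Bool) (x : V) :
    Finset.univ.filter (fun v => η v ≠ flipAt η x v) = {x} := by
  ext v
  rw [Finset.mem_filter, Finset.mem_singleton]
  rcases eq_or_ne v x with rfl | hv
  · simp [flipAt]
  · simp [flipAt, hv]

lemma exists_eq_flipAt_of_card_filter_ne {η η' : V → Bool}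
    (h : (Finset.univ.filter fun v => η v ≠ η' v).card = 1) : ∃ x, η' = flipAt η x := by
  obtain ⟨x, hx⟩ := Finset.card_eq_one.mp h
  have hmem (v : V) : η v ≠ η' v ↔ v = x := by
    simpa using Finset.ext_iff.mp hx v
  refine ⟨x, funext fun v => ?_⟩
  rcases eq_or_ne v x with rfl | hv
  · have := (hmem v).mpr rfl
    simp only [flipAt, Function.update_self]
    revert this
    cases η v <;> cases η' v <;> simp
  · rw [flipAt, Function.update_of_ne hv]
    exact (not_not.mp (mt (hmem v).mp hv)).symm

/-- `boxQ δ G τ` is definitionally `flipGenerator (boxRate δ G τ)`. -/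
noncomputable def flipGenerator (r : V → (V → Bool) → ℝ) : Matrix (V → Bool) (V → Bool) ℝ :=
  fun η η' =>
    if η = η' then -∑ x, r x η
    else if (Finset.univ.filter fun v => η v ≠ η' v).card = 1 then
      ∑ x ∈ Finset.univ.filter (fun v => η v ≠ η' v), r x η
    else 0

lemma flipGenerator_apply (r : V → (V → Bool) → ℝ) (η η' : V → Bool) :
    flipGenerator r η η' =
      ∑ x, r x η * ((if η' = flipAt η x then 1 else 0) - if η' = η then 1 else 0) := by
  unfold flipGenerator
  by_cases h₁ : η = η'
  · subst h₁
    simp [fun x => (flipAt_ne η x).symm]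
  rw [if_neg h₁]
  simp only [if_neg (Ne.symm h₁), sub_zero, mul_ite, mul_one, mul_zero]
  split
  · next h₂ =>
    obtain ⟨x, rfl⟩ := exists_eq_flipAt_of_card_filter_ne h₂
    simp [filter_ne_flipAt, (flipAt_injective η).eq_iff]
  · next h₂ =>
    refine (Finset.sum_eq_zero fun x _ => if_neg fun h => h₂ ?_).symm
    rw [h, filter_ne_flipAt, Finset.card_singleton]

lemma flipGenerator_mulVec (r : V → (V → Bool) → ℝ) (h : (V → Bool) → ℝ) :
    flipGenerator r *ᵥ h = fun η => ∑ x, r x η * (h (flipAt η x) - h η) := by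
  ext η
  simp only [Matrix.mulVec, dotProduct, flipGenerator_apply, Finset.sum_mul]
  rw [Finset.sum_comm]
  refine Finset.sum_congr rfl fun x _ => ?_
  simp [mul_sub, sub_mul, Finset.sum_sub_distrib]

end SpinFlip

section BasicCoupling

variable {V : Type*} (r₁ r₂ : V → (V → Bool) → ℝ)

noncomputable def jointFlipRate (s : (V → Bool) × (V → Bool)) (x : V) : ℝ :=
  if s.1 x = s.2 x then min (r₁ x s.1) (r₂ x s.2) else 0

variable {r₁ r₂}

lemma jointFlipRate_nonneg (hr₁ : 0 ≤ r₁) (hr₂ : 0 ≤ r₂) (s : (V → Bool) × (V → Bool)) (x : V) :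
    0 ≤ jointFlipRate r₁ r₂ s x := by
  unfold jointFlipRate
  split
  · exact le_min (hr₁ x s.1) (hr₂ x s.2)
  · rfl

lemma jointFlipRate_le_left (hr₁ : 0 ≤ r₁) (s : (V → Bool) × (V → Bool)) (x : V) :
    jointFlipRate r₁ r₂ s x ≤ r₁ x s.1 := by
  unfold jointFlipRate
  split
  · exact min_le_left _ _
  · exact hr₁ x s.1

lemma jointFlipRate_le_right (hr₂ : 0 ≤ r₂) (s : (V → Bool) × (V → Bool)) (x : V) :
    jointFlipRate r₁ r₂ s x ≤ r₂ x s.2 := by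
  unfold jointFlipRate
  split
  · exact min_le_right _ _
  · exact hr₂ x s.2

variable [Fintype V] [DecidableEq V] (r₁ r₂)

/-- The basic coupling: copies that agree at `x` flip there together at rate
`min (r₁ x η₁) (r₂ x η₂)`, and the excess rates act on one copy only. -/
noncomputable def basicCouplingGenerator : Module.End ℝ ((V → Bool) × (V → Bool) → ℝ) where
  toFun g s := ∑ x,
    (jointFlipRate r₁ r₂ s x * (g (flipAt s.1 x, flipAt s.2 x) - g s)
      + (r₁ x s.1 - jointFlipRate r₁ r₂ s x) * (g (flipAt s.1 x, s.2) - g s)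
      + (r₂ x s.2 - jointFlipRate r₁ r₂ s x) * (g (s.1, flipAt s.2 x) - g s))
  map_add' g h := by
    ext s
    simp only [Pi.add_apply, ← Finset.sum_add_distrib]
    exact Finset.sum_congr rfl fun x _ => by ring
  map_smul' c g := by
    ext s
    simp only [Pi.smul_apply, smul_eq_mul, RingHom.id_apply, Finset.mul_sum]
    exact Finset.sum_congr rfl fun x _ => by ring

lemma basicCouplingGenerator_apply (g : (V → Bool) × (V → Bool) → ℝ) (s) :
    basicCouplingGenerator r₁ r₂ g s = ∑ x,
      (jointFlipRate r₁ r₂ s x * (g (flipAt s.1 x, flipAt s.2 x) - g s)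
        + (r₁ x s.1 - jointFlipRate r₁ r₂ s x) * (g (flipAt s.1 x, s.2) - g s)
        + (r₂ x s.2 - jointFlipRate r₁ r₂ s x) * (g (s.1, flipAt s.2 x) - g s)) := rfl

lemma basicCouplingGenerator_comp_fst (g : (V → Bool) → ℝ) :
    basicCouplingGenerator r₁ r₂ (g ∘ Prod.fst) = (flipGenerator r₁ *ᵥ g) ∘ Prod.fst := by
  ext s
  simp only [basicCouplingGenerator_apply, flipGenerator_mulVec, Function.comp_apply]
  exact Finset.sum_congr rfl fun x _ => by ring

lemma basicCouplingGenerator_comp_snd (g : (V → Bool) → ℝ) :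
    basicCouplingGenerator r₁ r₂ (g ∘ Prod.snd) = (flipGenerator r₂ *ᵥ g) ∘ Prod.snd := by
  ext s
  simp only [basicCouplingGenerator_apply, flipGenerator_mulVec, Function.comp_apply]
  exact Finset.sum_congr rfl fun x _ => by ring

lemma basicCouplingGenerator_mismatch (x : V) (s : (V → Bool) × (V → Bool)) :
    basicCouplingGenerator r₁ r₂ (fun s => mismatch (s.1 x) (s.2 x)) s =
      if s.1 x = s.2 x then |r₁ x s.1 - r₂ x s.2| else -(r₁ x s.1 + r₂ x s.2) := by
  rw [basicCouplingGenerator_apply, Finset.sum_eq_single x]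
  · simp only [flipAt, Function.update_self, mismatch_not_left, mismatch_not_right]
    rw [jointFlipRate]
    split_ifs with h
    · rw [h, mismatch_self]
      rcases le_total (r₁ x s.1) (r₂ x s.2) with hr | hr
      · rw [min_eq_left hr, abs_of_nonpos (by linarith)]; ring
      · rw [min_eq_right hr, abs_of_nonneg (by linarith)]; ring
    · rw [mismatch, if_neg h]; ring
  · intro z _ hzx
    simp [flipAt, Function.update_of_ne (Ne.symm hzx)]
  · simp

variable {r₁ r₂}

/-- Uniformisation: for `M` at least the total jump rate, `1 + M⁻¹ L` is a positive operator. -/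
lemma monotone_one_add_smul_basicCouplingGenerator (hr₁ : 0 ≤ r₁) (hr₂ : 0 ≤ r₂) {M : ℝ}
    (hM : 0 < M) (hrM : ∀ s : (V → Bool) × (V → Bool), ∑ x, (r₁ x s.1 + r₂ x s.2) ≤ M) :
    Monotone ⇑(1 + M⁻¹ • basicCouplingGenerator r₁ r₂) := by
  rw [monotone_iff_map_nonneg]
  intro g hg s
  have hterm (x : V) : -((r₁ x s.1 + r₂ x s.2) * g s) ≤
      jointFlipRate r₁ r₂ s x * (g (flipAt s.1 x, flipAt s.2 x) - g s)
        + (r₁ x s.1 - jointFlipRate r₁ r₂ s x) * (g (flipAt s.1 x, s.2) - g s)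
        + (r₂ x s.2 - jointFlipRate r₁ r₂ s x) * (g (s.1, flipAt s.2 x) - g s) := by
    have hm := jointFlipRate_nonneg hr₁ hr₂ s x
    have hm₁ := jointFlipRate_le_left (r₂ := r₂) hr₁ s x
    have hm₂ := jointFlipRate_le_right (r₁ := r₁) hr₂ s x
    nlinarith [mul_nonneg hm (hg (flipAt s.1 x, flipAt s.2 x)), mul_nonneg hm (hg s),
      mul_nonneg (sub_nonneg.2 hm₁) (hg (flipAt s.1 x, s.2)),
      mul_nonneg (sub_nonneg.2 hm₂) (hg (s.1, flipAt s.2 x))]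
  have hsum : -(M * g s) ≤ basicCouplingGenerator r₁ r₂ g s := by
    calc -(M * g s) ≤ -((∑ x, (r₁ x s.1 + r₂ x s.2)) * g s) := by
          have := mul_le_mul_of_nonneg_right (hrM s) (hg s)
          linarith
      _ = ∑ x, -((r₁ x s.1 + r₂ x s.2) * g s) := by rw [Finset.sum_mul, Finset.sum_neg_distrib]
      _ ≤ _ := Finset.sum_le_sum fun x _ => hterm x
  have : M⁻¹ * -(M * g s) ≤ M⁻¹ * basicCouplingGenerator r₁ r₂ g s :=
    mul_le_mul_of_nonneg_left hsum (inv_nonneg.2 hM.le)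
  simp only [LinearMap.add_apply, Module.End.one_apply, LinearMap.smul_apply, Pi.add_apply,
    Pi.smul_apply, smul_eq_mul, Pi.zero_apply]
  rw [mul_neg, ← mul_assoc, inv_mul_cancel₀ hM.ne', one_mul] at this
  linarith

end BasicCoupling

/-- Couplings are encoded by their expectation functionals. -/
structure IsCoupling {α β : Type*} [Fintype α] [Fintype β] (E : (α × β → ℝ) →ₗ[ℝ] ℝ)
    (μ : α → ℝ) (ν : β → ℝ) : Prop where
  mono : Monotone E
  map_comp_fst (g : α → ℝ) : E (g ∘ Prod.fst) = μ ⬝ᵥ g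
  map_comp_snd (g : β → ℝ) : E (g ∘ Prod.snd) = ν ⬝ᵥ g

namespace IsCoupling

variable {α β : Type*} [Fintype α] [Fintype β] {E : (α × β → ℝ) →ₗ[ℝ] ℝ} {μ : α → ℝ} {ν : β → ℝ}

lemma map_one (hE : IsCoupling E μ ν) : E 1 = ∑ a, μ a := by
  rw [← dotProduct_one, ← hE.map_comp_fst]
  rfl

lemma abs_dotProduct_sub_le {E : (α × α → ℝ) →ₗ[ℝ] ℝ} {ν : α → ℝ} (hE : IsCoupling E μ ν)
    (g : α → ℝ) : |μ ⬝ᵥ g - ν ⬝ᵥ g| ≤ E (fun s => |g s.1 - g s.2|) := by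
  rw [← hE.map_comp_fst, ← hE.map_comp_snd, ← map_sub, abs_le, ← map_neg]
  exact ⟨hE.mono fun s => neg_abs_le _, hE.mono fun s => le_abs_self _⟩

end IsCoupling

lemma isCoupling_indep {α β : Type*} [Fintype α] [Fintype β] {μ : α → ℝ} {ν : β → ℝ}
    (hμ : 0 ≤ μ) (hμ₁ : ∑ a, μ a = 1) (hν : 0 ≤ ν) (hν₁ : ∑ b, ν b = 1) :
    IsCoupling (dotProductBilin ℝ ℝ fun s : α × β => μ s.1 * ν s.2) μ ν where
  mono _ _ h := dotProduct_le_dotProduct_of_nonneg_left h fun s => mul_nonneg (hμ s.1) (hν s.2)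
  map_comp_fst g := by
    simp only [dotProductBilin_apply_apply, dotProduct, Fintype.sum_prod_type,
      Function.comp_apply, mul_right_comm _ _ (g _), ← Finset.mul_sum, hν₁, mul_one]
  map_comp_snd g := by
    simp only [dotProductBilin_apply_apply, dotProduct, Fintype.sum_prod_type,
      Function.comp_apply, mul_assoc, ← Finset.mul_sum, ← Finset.sum_mul, hμ₁, one_mul]

section Cesaro

variable {S : Type*} (T : Module.End ℝ (S → ℝ)) (E₀ : (S → ℝ) →ₗ[ℝ] ℝ)

noncomputable def cesaroMean (n : ℕ) : (S → ℝ) →ₗ[ℝ] ℝ :=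
  (n : ℝ)⁻¹ • ∑ k ∈ Finset.range n, E₀ ∘ₗ T ^ k

lemma cesaroMean_apply (n : ℕ) (g : S → ℝ) :
    cesaroMean T E₀ n g = (n : ℝ)⁻¹ * ∑ k ∈ Finset.range n, E₀ ((T ^ k) g) := by
  simp [cesaroMean]

lemma cesaroMean_apply_sub (n : ℕ) (g : S → ℝ) :
    cesaroMean T E₀ n (T g - g) = (n : ℝ)⁻¹ * (E₀ ((T ^ n) g) - E₀ g) := by
  simp only [cesaroMean_apply, map_sub, ← Module.End.mul_apply, ← pow_succ]
  rw [← mul_sub, ← Finset.sum_sub_distrib, Finset.sum_range_sub (fun k => E₀ ((T ^ k) g)),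
    pow_zero, Module.End.one_apply]

variable {T E₀}

lemma monotone_cesaroMean (hT : Monotone T) (hE₀ : Monotone E₀) (n : ℕ) :
    Monotone (cesaroMean T E₀ n) := by
  intro f g hfg
  simp only [cesaroMean_apply, Module.End.coe_pow]
  gcongr with k
  exact hE₀ (hT.iterate k hfg)

lemma cesaroMean_comp {Ω : Type*} {π : S → Ω} {P : (Ω → ℝ) → Ω → ℝ} {F : (Ω → ℝ) → ℝ}
    (hT : ∀ g, T (g ∘ π) = P g ∘ π) (hP : ∀ g, F (P g) = F g) (hE₀ : ∀ g, E₀ (g ∘ π) = F g)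
    {n : ℕ} (hn : n ≠ 0) (g : Ω → ℝ) : cesaroMean T E₀ n (g ∘ π) = F g := by
  have hiter (k : ℕ) : ∀ g, E₀ ((T ^ k) (g ∘ π)) = F g := by
    induction k with
    | zero => simpa using hE₀
    | succ k ih => intro g; rw [pow_succ, Module.End.mul_apply, hT, ih, hP]
  simp only [cesaroMean_apply, hiter, Finset.sum_const, Finset.card_range, nsmul_eq_mul]
  field_simp

lemma neg_inv_le_cesaroMean_apply_sub (hT : Monotone T) (hE₀ : Monotone E₀) {g : S → ℝ}
    (hg₀ : 0 ≤ g) (hg₁ : E₀ g ≤ 1) (n : ℕ) : -(n : ℝ)⁻¹ ≤ cesaroMean T E₀ n (T g - g) := by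
  have hTn : 0 ≤ E₀ ((T ^ n) g) := by
    rw [← map_zero E₀, ← map_zero (T ^ n), Module.End.coe_pow]
    exact hE₀ (hT.iterate n hg₀)
  have := mul_le_mul_of_nonneg_left (by linarith : -1 ≤ E₀ ((T ^ n) g) - E₀ g)
    (inv_nonneg.2 (Nat.cast_nonneg n : (0 : ℝ) ≤ n))
  rw [cesaroMean_apply_sub]
  linarith

end Cesaro

/-- Cesàro averages of the uniformised coupled chain started from `μ₁ ⊗ μ₂` are couplings, and
they are stationary for the coupled dynamics up to an error `O(1/n)`. -/
theorem exists_isCoupling_neg_le_basicCouplingGenerator {V : Type*} [Fintype V] [DecidableEq V]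
    {r₁ r₂ : V → (V → Bool) → ℝ} (hr₁ : 0 ≤ r₁) (hr₂ : 0 ≤ r₂) {μ₁ μ₂ : (V → Bool) → ℝ}
    (hμ₁ : 0 ≤ μ₁) (hμ₁_sum : ∑ η, μ₁ η = 1) (hQ₁ : μ₁ ᵥ* flipGenerator r₁ = 0)
    (hμ₂ : 0 ≤ μ₂) (hμ₂_sum : ∑ η, μ₂ η = 1) (hQ₂ : μ₂ ᵥ* flipGenerator r₂ = 0)
    {ε : ℝ} (hε : 0 < ε) :
    ∃ E, IsCoupling E μ₁ μ₂ ∧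
      ∀ g, 0 ≤ g → g ≤ 1 → -ε ≤ E (basicCouplingGenerator r₁ r₂ g) := by
  obtain ⟨M₀, hM₀⟩ :=
    Finite.exists_le fun s : (V → Bool) × (V → Bool) => ∑ x, (r₁ x s.1 + r₂ x s.2)
  set M := max M₀ 1
  have hM : 0 < M := lt_max_of_lt_right one_pos
  set L := basicCouplingGenerator r₁ r₂
  set T : Module.End ℝ _ := 1 + M⁻¹ • L
  have hT : Monotone T := monotone_one_add_smul_basicCouplingGenerator hr₁ hr₂ hM
    fun s => (hM₀ s).trans (le_max_left _ _)
  set E₀ := dotProductBilin ℝ ℝ fun s : (V → Bool) × (V → Bool) => μ₁ s.1 * μ₂ s.2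
  have hE₀ : IsCoupling E₀ μ₁ μ₂ := isCoupling_indep hμ₁ hμ₁_sum hμ₂ hμ₂_sum
  obtain ⟨n, hMεn⟩ := exists_nat_gt (M / ε)
  have hn₀ : (0 : ℝ) < n := (div_pos hM hε).trans hMεn
  have hstat {μ : (V → Bool) → ℝ} {Q : Matrix (V → Bool) (V → Bool) ℝ} (hQ : μ ᵥ* Q = 0) g :
      μ ⬝ᵥ (g + M⁻¹ • (Q *ᵥ g)) = μ ⬝ᵥ g := by
    rw [dotProduct_add, dotProduct_smul, dotProduct_mulVec, hQ, zero_dotProduct, smul_zero,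
      add_zero]
  refine ⟨cesaroMean T E₀ n, ⟨monotone_cesaroMean hT hE₀.mono n, ?_, ?_⟩, fun g hg₀ hg₁ => ?_⟩
  · refine cesaroMean_comp (fun g => ?_) (hstat hQ₁) hE₀.map_comp_fst (Nat.cast_pos.mp hn₀).ne'
    change g ∘ Prod.fst + M⁻¹ • L (g ∘ Prod.fst) = _
    rw [basicCouplingGenerator_comp_fst]
    rfl
  · refine cesaroMean_comp (fun g => ?_) (hstat hQ₂) hE₀.map_comp_snd (Nat.cast_pos.mp hn₀).ne'
    change g ∘ Prod.snd + M⁻¹ • L (g ∘ Prod.snd) = _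
    rw [basicCouplingGenerator_comp_snd]
    rfl
  have hLg : L g = M • (T g - g) := by
    simp [T, smul_smul, mul_inv_cancel₀ hM.ne']
  have hmean := neg_inv_le_cesaroMean_apply_sub hT hE₀.mono hg₀
    ((hE₀.mono hg₁).trans (hE₀.map_one.trans hμ₁_sum).le) n
  have hMn : M * (n : ℝ)⁻¹ < ε := by
    rw [← div_eq_mul_inv, div_lt_iff₀ hn₀]
    rwa [div_lt_iff₀ hε, mul_comm] at hMεn
  rw [hLg, map_smul, smul_eq_mul]
  nlinarith [mul_le_mul_of_nonneg_left hmean hM.le]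

section NoisyVoter

variable {d : ℕ} {δ : ℝ} {G : Finset (Fin d → ℤ)} {τ τ' : {y // y ∈ boxBoundary G} → Bool}

lemma fullConf_coe (τ : {y // y ∈ boxBoundary G} → Bool) (η : {x // x ∈ G} → Bool)
    (x : {x // x ∈ G}) : fullConf G τ η x = η x := by
  simp [fullConf]

lemma boxRate_eq_sum_mismatch (x : {x // x ∈ G}) (η : {x // x ∈ G} → Bool) :
    boxRate δ G τ x η = 1 / (2 * δ + 1) *
      (1 / (2 * (d : ℝ)) * ∑ y ∈ latNbrs (x : Fin d → ℤ), mismatch (fullConf G τ η y) (η x)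
        + δ) := by
  simp only [boxRate, filter_latAdj_and_eq_filter_latNbrs x.2, Finset.natCast_card_filter,
    mismatch, ite_not]

lemma boxRate_nonneg (hδ : 0 ≤ δ) : 0 ≤ boxRate δ G τ := fun x η => by
  unfold boxRate
  positivity

def siteMismatch (G : Finset (Fin d → ℤ)) (τ τ' : {y // y ∈ boxBoundary G} → Bool)
    (y : Fin d → ℤ) (s : ({x // x ∈ G} → Bool) × ({x // x ∈ G} → Bool)) : ℝ :=
  mismatch (fullConf G τ s.1 y) (fullConf G τ' s.2 y)

lemma siteMismatch_coe (x : {x // x ∈ G}) :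
    siteMismatch G τ τ' x = fun s => mismatch (s.1 x) (s.2 x) := by
  ext s
  simp [siteMismatch, fullConf_coe]

lemma siteMismatch_eq_zero {u y : Fin d → ℤ}
    (hτ : ∀ w : {y // y ∈ boxBoundary G}, (w : Fin d → ℤ) ≠ u → τ w = τ' w)
    (hyG : y ∉ G) (hyu : y ≠ u) : siteMismatch G τ τ' y = 0 := by
  ext s
  simp only [siteMismatch, fullConf, dif_neg hyG, Pi.zero_apply]
  split_ifs with hy
  · rw [hτ ⟨y, hy⟩ hyu, mismatch_self]
  · exact mismatch_self _

lemma abs_boxRate_sub_boxRate_le (hδ : 0 ≤ δ) (x : {x // x ∈ G})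
    {s : ({x // x ∈ G} → Bool) × ({x // x ∈ G} → Bool)} (h : s.1 x = s.2 x) :
    |boxRate δ G τ x s.1 - boxRate δ G τ' x s.2| ≤
      1 / (2 * δ + 1) * (1 / (2 * (d : ℝ)) *
        ∑ y ∈ latNbrs (x : Fin d → ℤ), siteMismatch G τ τ' y s) := by
  have hsum : |∑ y ∈ latNbrs (x : Fin d → ℤ), mismatch (fullConf G τ s.1 y) (s.1 x)
      - ∑ y ∈ latNbrs (x : Fin d → ℤ), mismatch (fullConf G τ' s.2 y) (s.2 x)|
      ≤ ∑ y ∈ latNbrs (x : Fin d → ℤ), siteMismatch G τ τ' y s := by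
    rw [← Finset.sum_sub_distrib]
    refine (Finset.abs_sum_le_sum_abs _ _).trans (Finset.sum_le_sum fun y _ => ?_)
    rw [h]
    exact abs_mismatch_sub_mismatch_le _ _ _
  rw [boxRate_eq_sum_mismatch, boxRate_eq_sum_mismatch, ← mul_sub, add_sub_add_right_eq_sub,
    ← mul_sub, abs_mul, abs_mul, abs_of_nonneg (by positivity), abs_of_nonneg (by positivity)]
  gcongr

lemma one_sub_le_boxRate_add_boxRate (hd : 1 ≤ d) (hδ : 0 ≤ δ) (x : {x // x ∈ G})
    {s : ({x // x ∈ G} → Bool) × ({x // x ∈ G} → Bool)} (h : s.1 x ≠ s.2 x) :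
    1 - 1 / (2 * δ + 1) * (1 / (2 * (d : ℝ)) *
        ∑ y ∈ latNbrs (x : Fin d → ℤ), siteMismatch G τ τ' y s) ≤
      boxRate δ G τ x s.1 + boxRate δ G τ' x s.2 := by
  have hsum : 2 * (d : ℝ) - ∑ y ∈ latNbrs (x : Fin d → ℤ), siteMismatch G τ τ' y s ≤
      ∑ y ∈ latNbrs (x : Fin d → ℤ), mismatch (fullConf G τ s.1 y) (s.1 x)
        + ∑ y ∈ latNbrs (x : Fin d → ℤ), mismatch (fullConf G τ' s.2 y) (s.2 x) := by
    have hcard : ∑ _y ∈ latNbrs (x : Fin d → ℤ), (1 : ℝ) = 2 * d := by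
      simp [card_latNbrs]
    rw [← hcard, ← Finset.sum_sub_distrib, ← Finset.sum_add_distrib]
    exact Finset.sum_le_sum fun y _ => one_sub_mismatch_le_mismatch_add_mismatch h _ _
  have hd' : (0 : ℝ) < d := by exact_mod_cast hd
  rw [boxRate_eq_sum_mismatch, boxRate_eq_sum_mismatch]
  calc 1 - 1 / (2 * δ + 1) * (1 / (2 * (d : ℝ)) *
        ∑ y ∈ latNbrs (x : Fin d → ℤ), siteMismatch G τ τ' y s)
      = 1 / (2 * δ + 1) * (1 / (2 * (d : ℝ)) *
          (2 * d - ∑ y ∈ latNbrs (x : Fin d → ℤ), siteMismatch G τ τ' y s) + 2 * δ) := by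
        field_simp
        ring
    _ ≤ _ := by
        have := mul_le_mul_of_nonneg_left (mul_le_mul_of_nonneg_left hsum
          (by positivity : (0 : ℝ) ≤ 1 / (2 * d))) (by positivity : (0 : ℝ) ≤ 1 / (2 * δ + 1))
        linarith

lemma basicCouplingGenerator_boxRate_mismatch_le (hd : 1 ≤ d) (hδ : 0 ≤ δ) (x : {x // x ∈ G})
    (s : ({x // x ∈ G} → Bool) × ({x // x ∈ G} → Bool)) :
    basicCouplingGenerator (boxRate δ G τ) (boxRate δ G τ') (fun s => mismatch (s.1 x) (s.2 x)) s
      ≤ 1 / (2 * δ + 1) * (1 / (2 * (d : ℝ)) *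
          ∑ y ∈ latNbrs (x : Fin d → ℤ), siteMismatch G τ τ' y s) - mismatch (s.1 x) (s.2 x) := by
  rw [basicCouplingGenerator_mismatch, mismatch]
  split_ifs with h
  · rw [sub_zero]
    exact abs_boxRate_sub_boxRate_le hδ x h
  · linarith [one_sub_le_boxRate_add_boxRate (τ := τ) (τ' := τ') hd hδ x h]

lemma map_siteMismatch_le_mean (hd : 1 ≤ d) (hδ : 0 ≤ δ)
    {E : (({x // x ∈ G} → Bool) × ({x // x ∈ G} → Bool) → ℝ) →ₗ[ℝ] ℝ} (hE : Monotone E) {ε : ℝ}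
    (hgen : ∀ g, 0 ≤ g → g ≤ 1 → -ε ≤ E (basicCouplingGenerator (boxRate δ G τ) (boxRate δ G τ') g))
    {x : Fin d → ℤ} (hx : x ∈ G) :
    E (siteMismatch G τ τ' x) ≤
      1 / (2 * δ + 1) * (1 / (2 * (d : ℝ)) * ∑ y ∈ latNbrs x, E (siteMismatch G τ τ' y)) + ε := by
  have hf := siteMismatch_coe (τ := τ) (τ' := τ') ⟨x, hx⟩
  have hL := hgen (fun s => mismatch (s.1 ⟨x, hx⟩) (s.2 ⟨x, hx⟩))
    (fun s => mismatch_nonneg _ _) (fun s => mismatch_le_one _ _)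
  have hle := hE fun s =>
    basicCouplingGenerator_boxRate_mismatch_le (τ := τ) (τ' := τ') hd hδ ⟨x, hx⟩ s
  have hrhs : (fun s => 1 / (2 * δ + 1) * (1 / (2 * (d : ℝ)) *
      ∑ y ∈ latNbrs x, siteMismatch G τ τ' y s) - mismatch (s.1 ⟨x, hx⟩) (s.2 ⟨x, hx⟩)) =
      (1 / (2 * δ + 1) * (1 / (2 * (d : ℝ)))) • ∑ y ∈ latNbrs x, siteMismatch G τ τ' y
        - siteMismatch G τ τ' x := by
    ext s
    simp [hf, Finset.sum_apply, mul_assoc]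
  rw [hrhs, map_sub, map_smul, map_sum, smul_eq_mul, mul_assoc, ← hf] at hle
  rw [← hf] at hL
  linarith

lemma sum_projMeasure_eq_dotProduct {H : Finset (Fin d → ℤ)} (hHG : H ⊆ G)
    (μ : ({x // x ∈ G} → Bool) → ℝ) (A : Finset ({x // x ∈ H} → Bool)) :
    ∑ ζ ∈ A, projMeasure G H hHG μ ζ =
      μ ⬝ᵥ fun η => if (fun v : {x // x ∈ H} => η ⟨v.1, hHG v.2⟩) ∈ A then 1 else 0 := by
  have hfib (ζ : {x // x ∈ H} → Bool) : projMeasure G H hHG μ ζ =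
      ∑ η ∈ Finset.univ.filter fun η => (fun v : {x // x ∈ H} => η ⟨v.1, hHG v.2⟩) = ζ, μ η := by
    simp only [projMeasure, funext_iff]
  simp only [hfib, Finset.sum_fiberwise_eq_sum_filter, dotProduct, mul_ite, mul_one, mul_zero,
    Finset.sum_ite, Finset.sum_const_zero, add_zero]

lemma tvDist_projMeasure_le {H : Finset (Fin d → ℤ)} (hHG : H ⊆ G)
    {E : (({x // x ∈ G} → Bool) × ({x // x ∈ G} → Bool) → ℝ) →ₗ[ℝ] ℝ}
    {μ₁ μ₂ : ({x // x ∈ G} → Bool) → ℝ} (hE : IsCoupling E μ₁ μ₂) :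
    tvDist (projMeasure G H hHG μ₁) (projMeasure G H hHG μ₂) ≤
      ∑ v ∈ H, E (siteMismatch G τ τ' v) := by
  refine Finset.sup'_le _ _ fun A _ => ?_
  rw [sum_projMeasure_eq_dotProduct, sum_projMeasure_eq_dotProduct, ← map_sum]
  refine (hE.abs_dotProduct_sub_le _).trans (hE.mono fun s => ?_)
  rw [Finset.sum_apply]
  by_cases hs : (fun v : {x // x ∈ H} => s.1 ⟨v.1, hHG v.2⟩) = fun v => s.2 ⟨v.1, hHG v.2⟩
  · rw [hs, sub_self, abs_zero]
    exact Finset.sum_nonneg fun _ _ => mismatch_nonneg _ _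
  obtain ⟨v, hv⟩ := Function.ne_iff.mp hs
  calc _ ≤ (1 : ℝ) := by split_ifs <;> norm_num
    _ = siteMismatch G τ τ' v s := by simp [siteMismatch_coe ⟨v, hHG v.2⟩, mismatch, hv]
    _ ≤ _ := Finset.single_le_sum (fun _ _ => mismatch_nonneg _ _) v.2

theorem tvDist_projMeasure_le_pow_distToBox (hd : 1 ≤ d) (hδ : 0 < δ)
    {H : Finset (Fin d → ℤ)} (hHG : H ⊆ G) {u : Fin d → ℤ}
    (hτ : ∀ w : {y // y ∈ boxBoundary G}, (w : Fin d → ℤ) ≠ u → τ w = τ' w)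
    {μ₁ μ₂ : ({x // x ∈ G} → Bool) → ℝ}
    (hμ₁ : 0 ≤ μ₁) (hμ₁_sum : ∑ η, μ₁ η = 1) (hQ₁ : μ₁ ᵥ* boxQ δ G τ = 0)
    (hμ₂ : 0 ≤ μ₂) (hμ₂_sum : ∑ η, μ₂ η = 1) (hQ₂ : μ₂ ᵥ* boxQ δ G τ' = 0) :
    tvDist (projMeasure G H hHG μ₁) (projMeasure G H hHG μ₂) ≤
      H.card * (1 / (2 * δ + 1)) ^ distToBox u H := by
  have hα₀ : (0 : ℝ) ≤ 1 / (2 * δ + 1) := by positivity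
  have hα₁ : 1 / (2 * δ + 1) < 1 := by rw [div_lt_one (by linarith)]; linarith
  refine le_of_forall_pos_le_add_mul (c := H.card / (1 - 1 / (2 * δ + 1))) fun ε hε => ?_
  obtain ⟨E, hE, hgen⟩ := exists_isCoupling_neg_le_basicCouplingGenerator
    (boxRate_nonneg hδ.le) (boxRate_nonneg hδ.le) hμ₁ hμ₁_sum hQ₁ hμ₂ hμ₂_sum hQ₂ hε
  have hdecay := le_pow_add_of_le_mean (u := u) (g := fun y => E (siteMismatch G τ τ' y))
    hα₀ hα₁ hε.le
    (fun y => (hE.mono fun s => mismatch_le_one _ _).trans (hE.map_one.trans hμ₁_sum).le)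
    (fun y hyG hyu => by simp [siteMismatch_eq_zero hτ hyG hyu])
    (fun x hx => map_siteMismatch_le_mean hd hδ.le hE.mono hgen hx)
  calc _ ≤ ∑ v ∈ H, E (siteMismatch G τ τ' v) := tvDist_projMeasure_le hHG hE
    _ ≤ ∑ v ∈ H, ((1 / (2 * δ + 1)) ^ distToBox u H + ε / (1 - 1 / (2 * δ + 1))) :=
        Finset.sum_le_sum fun v hv => hdecay _ v (latDist_comm u v ▸ Nat.sInf_le ⟨v, hv, rfl⟩)
    _ = _ := by rw [Finset.sum_const, nsmul_eq_mul]; ring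

end NoisyVoter

/-- Strong spatial mixing for the noisy voter model on `ℤ^d`, for every value of the noise
parameter `δ > 0`: there are constants `C, c > 0` such that for every finite box `G ⊂ ℤ^d`,
every box `H ⊆ G`, every site `u ∈ ∂G` and every pair of boundary conditions agreeing off
`u`, the stationary distributions of the corresponding dynamics on `G` satisfy
`‖μ_G^τ|_H − μ_G^{τ^u}|_H‖ ≤ C·|V(H)|·exp(−c·dist(u,H))`. -/
theorem noisy_voter_strong_spatial_mixing
    (d : ℕ) (hd : 1 ≤ d) (δ : ℝ) (hδ : 0 < δ) :
    ∃ C > (0 : ℝ), ∃ c > (0 : ℝ),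
      ∀ (G H : Finset (Fin d → ℤ)) (hHG : H ⊆ G) (u : Fin d → ℤ), u ∈ boxBoundary G →
      ∀ (τ τ' : {y // y ∈ boxBoundary G} → Bool),
        (∀ w : {y // y ∈ boxBoundary G}, (w : Fin d → ℤ) ≠ u → τ w = τ' w) →
      ∀ (μ₁ μ₂ : ({x // x ∈ G} → Bool) → ℝ),
        (∀ η, 0 ≤ μ₁ η) → (∑ η, μ₁ η = 1) → Matrix.vecMul μ₁ (boxQ δ G τ) = 0 →
        (∀ η, 0 ≤ μ₂ η) → (∑ η, μ₂ η = 1) → Matrix.vecMul μ₂ (boxQ δ G τ') = 0 →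
        tvDist (projMeasure G H hHG μ₁) (projMeasure G H hHG μ₂) ≤
          C * (H.card : ℝ) * Real.exp (-c * (distToBox u H : ℝ)) := by
  refine ⟨1, one_pos, Real.log (2 * δ + 1), Real.log_pos (by linarith), ?_⟩
  intro G H hHG u _ τ τ' hτ μ₁ μ₂ hμ₁ hμ₁_sum hQ₁ hμ₂ hμ₂_sum hQ₂
  have hexp : Real.exp (-Real.log (2 * δ + 1) * distToBox u H) =
      (1 / (2 * δ + 1)) ^ distToBox u H := by
    rw [neg_mul, Real.exp_neg, mul_comm, Real.exp_nat_mul, Real.exp_log (by linarith), one_div,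
      inv_pow]
  rw [one_mul, hexp]
  exact tvDist_projMeasure_le_pow_distToBox hd hδ hHG hτ hμ₁ hμ₁_sum hQ₁ hμ₂ hμ₂_sum hQ₂
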